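/- arXiv:1808.06864 — 2 statements merged into one kernel-verified Lean document; each statement's English description precedes it below -/
import Mathlib

section
/- For every ε > 0 there exists n₀ such that the following holds for every (simple, finite) graph G on n ≥ n₀ vertices. The vertex set of G can be partitioned into four sets Z, B, C and D such that: (1) the induced subgraph G[Z] has a perfect matching; (2) G contains a perfect matching between C and D, i.e., a set of |C| = |D| pairwise disjoint edges each with one endpoint in C and one endpoint in D; and (3) the number of edges {u,v} of G with u ∈ B ∪ D and v ∈ Z ∪ B ∪ D is at most εn². -/
open Finset
open scoped Classical

set_option linter.unusedSectionVars false
set_option linter.unusedVariables false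

namespace S12

variable {V : Type} [Fintype V] [DecidableEq V] (G : SimpleGraph V)

def IsMM (f : V → V) : Prop := (∀ v, f (f v) = v) ∧ (∀ v, f v ≠ v → G.Adj v (f v))

noncomputable def fixset (f : V → V) : Finset V := Finset.univ.filter (fun v => f v = v)

lemma mem_fixset {f : V → V} {v : V} : v ∈ fixset f ↔ f v = v := by
  simp [fixset]

lemma isMM_id : IsMM G (id : V → V) := ⟨fun v => rfl, fun v hv => absurd rfl hv⟩

variable (N : V → V)

noncomputable def Stage : ℕ → Finset V
  | 0 => fixset N
  | (k+1) => Stage k ∪ Finset.univ.filter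
      (fun y => N y ≠ y ∧ ∃ a ∈ Stage k, ∃ b ∈ Stage k,
        a ≠ b ∧ G.Adj a (N y) ∧ G.Adj b (N y))

lemma Stage_subset_succ (k : ℕ) : Stage G N k ⊆ Stage G N (k+1) := by
  intro v hv; simp [Stage]; left; exact hv

lemma Stage_mono {k m : ℕ} (h : k ≤ m) : Stage G N k ⊆ Stage G N m := by
  induction m with
  | zero => simp_all
  | succ m ih =>
    rcases Nat.lt_or_ge k (m+1) with h' | h'
    · exact (ih (Nat.lt_succ_iff.mp h')).trans (Stage_subset_succ G N m)
    · have : k = m + 1 := le_antisymm h h'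
      subst this; exact Finset.Subset.refl _

lemma mem_Stage_succ {y : V} {k : ℕ} (h : y ∈ Stage G N (k+1)) :
    y ∈ Stage G N k ∨ (N y ≠ y ∧ ∃ a ∈ Stage G N k, ∃ b ∈ Stage G N k,
      a ≠ b ∧ G.Adj a (N y) ∧ G.Adj b (N y)) := by
  simp only [Stage, Finset.mem_union, Finset.mem_filter, Finset.mem_univ, true_and] at h
  tauto

lemma Stage_succ_of_touched {y a b : V} {k : ℕ} (ha : a ∈ Stage G N k) (hb : b ∈ Stage G N k)
    (hab : a ≠ b) (hay : G.Adj a (N y)) (hby : G.Adj b (N y)) (hy : N y ≠ y) :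
    y ∈ Stage G N (k+1) := by
  simp only [Stage, Finset.mem_union, Finset.mem_filter, Finset.mem_univ, true_and]
  right; exact ⟨hy, a, ha, b, hb, hab, hay, hby⟩

lemma Stage_stab_of_eq {k : ℕ} (h : Stage G N (k+1) = Stage G N k) :
    ∀ m, k ≤ m → Stage G N m = Stage G N k := by
  intro m hm
  induction m with
  | zero => have hk : k = 0 := Nat.le_zero.mp hm; rw [hk]
  | succ m ih =>
    rcases Nat.lt_or_ge k (m+1) with h' | h'
    · have hmk : Stage G N m = Stage G N k := ih (Nat.lt_succ_iff.mp h')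
      calc Stage G N (m+1)
          = Stage G N m ∪ Finset.univ.filter
              (fun y => N y ≠ y ∧ ∃ a ∈ Stage G N m, ∃ b ∈ Stage G N m,
                a ≠ b ∧ G.Adj a (N y) ∧ G.Adj b (N y)) := rfl
        _ = Stage G N k ∪ Finset.univ.filter
              (fun y => N y ≠ y ∧ ∃ a ∈ Stage G N k, ∃ b ∈ Stage G N k,
                a ≠ b ∧ G.Adj a (N y) ∧ G.Adj b (N y)) := by rw [hmk]
        _ = Stage G N (k+1) := rfl
        _ = Stage G N k := h
    · have : k = m + 1 := le_antisymm hm h'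
      rw [this]

lemma Stage_stabilizes :
    Stage G N (Fintype.card V + 1) = Stage G N (Fintype.card V) := by
  by_contra hne
  -- then all earlier stages are strict
  have hstrict : ∀ k, k ≤ Fintype.card V → Stage G N k ≠ Stage G N (k+1) := by
    intro k hk heq
    exact hne ((Stage_stab_of_eq G N heq.symm (Fintype.card V + 1) (by omega)).trans
      (Stage_stab_of_eq G N heq.symm (Fintype.card V) (by omega)).symm)
  have hcard : ∀ k, k ≤ Fintype.card V + 1 → k ≤ (Stage G N k).card := by
    intro k hk
    induction k with
    | zero => omega
    | succ k ih =>
      have h1 : k ≤ (Stage G N k).card := ih (by omega)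
      have h2 : Stage G N k ⊂ Stage G N (k+1) :=
        (Finset.ssubset_iff_subset_ne).mpr ⟨Stage_subset_succ G N k, hstrict k (by omega)⟩
      have := Finset.card_lt_card h2
      omega
  have := hcard (Fintype.card V + 1) le_rfl
  have hle : (Stage G N (Fintype.card V + 1)).card ≤ Fintype.card V :=
    (Finset.card_le_card (Finset.subset_univ _)).trans (by simp)
  omega

def IsFlip (s : V) (A : Finset V) : Prop :=
  s ∈ A ∧ (∀ v ∈ A, N v ∈ A) ∧ (∃! r, r ∈ A ∧ N r = r) ∧
  ∃ M', IsMM G M' ∧ (∀ v, v ∉ A → M' v = N v) ∧ (∀ v ∈ A, M' v ∈ A) ∧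
    (∀ v ∈ A, (M' v = v ↔ v = s))

def SB (k : ℕ) (A : Finset V) : Prop :=
  ∀ v ∈ A, N v = v ∨ v ∈ Stage G N k ∨ N v ∈ Stage G N k

lemma SB_mono {k m : ℕ} (h : k ≤ m) {A : Finset V} (hA : SB G N k A) : SB G N m A := by
  intro v hv
  rcases hA v hv with h1 | h1 | h1
  · exact Or.inl h1
  · exact Or.inr (Or.inl (Stage_mono G N h h1))
  · exact Or.inr (Or.inr (Stage_mono G N h h1))

def ML (k : ℕ) : Prop :=
  ∀ s ∈ Stage G N k, ∀ s' ∈ Stage G N k, s ≠ s' →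
    ∃ A A', IsFlip G N s A ∧ IsFlip G N s' A' ∧ Disjoint A A' ∧ SB G N k A ∧ SB G N k A'


section Surgery

variable (hN : IsMM G N) (hmin : ∀ f, IsMM G f → (fixset N).card ≤ (fixset f).card)

/-- Combine two disjoint flips into a single matching map exposing both targets. -/
lemma combined (hN : IsMM G N) {s s' : V} {A A' : Finset V} (hd : Disjoint A A')
    (h : IsFlip G N s A) (h' : IsFlip G N s' A') :
    ∃ M : V → V, IsMM G M ∧ (∀ v, v ∉ A ∪ A' → M v = N v) ∧ M s = s ∧ M s' = s' ∧
      (fixset M).card = (fixset N).card := by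
  obtain ⟨hsA, hNA, ⟨r, ⟨hrA, hrN⟩, hru⟩, M₁, hM₁, hM₁o, hM₁c, hM₁f⟩ := h
  obtain ⟨hsA', hNA', ⟨r', ⟨hrA', hrN'⟩, hru'⟩, M₂, hM₂, hM₂o, hM₂c, hM₂f⟩ := h'
  classical
  set M : V → V := fun v => if v ∈ A then M₁ v else if v ∈ A' then M₂ v else N v with hM
  have hdisj : ∀ x, x ∈ A' → x ∉ A := fun x hx => (Finset.disjoint_right.mp hd) hx
  have hMA : ∀ v ∈ A, M v = M₁ v := by
    intro v hv; simp only [hM]; rw [if_pos hv]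
  have hMA' : ∀ v ∈ A', M v = M₂ v := by
    intro v hv; simp only [hM]; rw [if_neg (hdisj v hv), if_pos hv]
  have hMout : ∀ v, v ∉ A → v ∉ A' → M v = N v := by
    intro v hv hv'; simp only [hM]; rw [if_neg hv, if_neg hv']
  have hNclosed : ∀ v, v ∉ A → N v ∉ A := by
    intro v hv hNv
    exact hv (by have := hNA _ hNv; rwa [hN.1 v] at this)
  have hNclosed' : ∀ v, v ∉ A' → N v ∉ A' := by
    intro v hv hNv
    exact hv (by have := hNA' _ hNv; rwa [hN.1 v] at this)
  have hinv : ∀ v, M (M v) = v := by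
    intro v
    by_cases hv : v ∈ A
    · rw [hMA v hv, hMA _ (hM₁c v hv), hM₁.1]
    · by_cases hv' : v ∈ A'
      · rw [hMA' v hv', hMA' _ (hM₂c v hv'), hM₂.1]
      · rw [hMout v hv hv', hMout _ (hNclosed v hv) (hNclosed' v hv'), hN.1]
  have hadj : ∀ v, M v ≠ v → G.Adj v (M v) := by
    intro v hv
    by_cases h1 : v ∈ A
    · rw [hMA v h1] at hv ⊢; exact hM₁.2 v hv
    · by_cases h2 : v ∈ A'
      · rw [hMA' v h2] at hv ⊢; exact hM₂.2 v hv
      · rw [hMout v h1 h2] at hv ⊢; exact hN.2 v hv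
  have hfix : fixset M = ((fixset N) \ (A ∪ A')) ∪ {s, s'} := by
    ext v
    simp only [mem_fixset, Finset.mem_union, Finset.mem_sdiff, Finset.mem_insert,
      Finset.mem_singleton]
    constructor
    · intro hv
      by_cases h1 : v ∈ A
      · rw [hMA v h1] at hv; right; left; exact (hM₁f v h1).mp hv
      · by_cases h2 : v ∈ A'
        · rw [hMA' v h2] at hv; right; right; exact (hM₂f v h2).mp hv
        · rw [hMout v h1 h2] at hv; left; exact ⟨hv, by simp [h1, h2]⟩
    · intro hv
      rcases hv with ⟨hv1, hv2⟩ | hv | hv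
      · simp only [not_or] at hv2
        rw [hMout v hv2.1 hv2.2]; exact hv1
      · subst hv; rw [hMA v hsA]; exact (hM₁f v hsA).mpr rfl
      · subst hv; rw [hMA' v hsA']; exact (hM₂f v hsA').mpr rfl
  have hfixN : fixset N = ((fixset N) \ (A ∪ A')) ∪ {r, r'} := by
    ext v
    simp only [mem_fixset, Finset.mem_union, Finset.mem_sdiff, Finset.mem_insert,
      Finset.mem_singleton]
    constructor
    · intro hv
      by_cases h1 : v ∈ A
      · right; left; exact hru v ⟨h1, hv⟩
      · by_cases h2 : v ∈ A'
        · right; right; exact hru' v ⟨h2, hv⟩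
        · left; exact ⟨hv, by simp [h1, h2]⟩
    · intro hv
      rcases hv with ⟨hv1, hv2⟩ | hv | hv
      · exact hv1
      · subst hv; exact hrN
      · subst hv; exact hrN'
  have hss' : s ≠ s' := fun h => (hdisj s (h ▸ hsA')) hsA
  have hrr' : r ≠ r' := fun h => (hdisj r (h ▸ hrA')) hrA
  have hcard : (fixset M).card = (fixset N).card := by
    rw [hfix]
    conv_rhs => rw [hfixN]
    rw [Finset.card_union_of_disjoint, Finset.card_union_of_disjoint]
    · rw [Finset.card_pair hss', Finset.card_pair hrr']
    · simp only [Finset.disjoint_insert_right, Finset.mem_sdiff, Finset.disjoint_singleton_right]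
      constructor
      · rintro ⟨-, hr2⟩; exact hr2 (by simp [hrA])
      · rintro ⟨-, hr2⟩; exact hr2 (by simp [hrA'])
    · simp only [Finset.disjoint_insert_right, Finset.mem_sdiff, Finset.disjoint_singleton_right]
      constructor
      · rintro ⟨-, hr2⟩; exact hr2 (by simp [hsA])
      · rintro ⟨-, hr2⟩; exact hr2 (by simp [hsA'])
  refine ⟨M, ⟨hinv, hadj⟩, ?_, ?_, ?_, hcard⟩
  · intro v hv
    simp only [Finset.mem_union, not_or] at hv
    exact hMout v hv.1 hv.2
  · rw [hMA s hsA]; exact (hM₁f s hsA).mpr rfl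
  · rw [hMA' s' hsA']; exact (hM₂f s' hsA').mpr rfl

/-- Two simultaneously exposed vertices cannot be adjacent. -/
lemma no_exposed_adjacent (hmin : ∀ f, IsMM G f → (fixset N).card ≤ (fixset f).card)
    {M : V → V} {p q : V} (hM : IsMM G M)
    (hc : (fixset M).card = (fixset N).card)
    (hp : M p = p) (hq : M q = q) (hpq : p ≠ q) (hadj : G.Adj p q) : False := by
  classical
  set M' : V → V := fun v => if v = p then q else if v = q then p else M v with hM'
  have hMp : M' p = q := by simp [hM']
  have hMq : M' q = p := by simp [hM', hpq.symm]
  have hMo : ∀ v, v ≠ p → v ≠ q → M' v = M v := by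
    intro v h1 h2; simp [hM', h1, h2]
  have hinv : ∀ v, M' (M' v) = v := by
    intro v
    by_cases h1 : v = p
    · subst h1; rw [hMp, hMq]
    · by_cases h2 : v = q
      · subst h2; rw [hMq, hMp]
      · rw [hMo v h1 h2]
        have hne1 : M v ≠ p := fun h => h1 (by rw [← hM.1 v, h, hp])
        have hne2 : M v ≠ q := fun h => h2 (by rw [← hM.1 v, h, hq])
        rw [hMo _ hne1 hne2, hM.1]
  have hadj' : ∀ v, M' v ≠ v → G.Adj v (M' v) := by
    intro v hv
    by_cases h1 : v = p
    · subst h1; rw [hMp]; exact hadj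
    · by_cases h2 : v = q
      · subst h2; rw [hMq]; exact hadj.symm
      · rw [hMo v h1 h2] at hv ⊢; exact hM.2 v hv
  have hfix : fixset M' = (fixset M) \ {p, q} := by
    ext v
    simp only [mem_fixset, Finset.mem_sdiff, Finset.mem_insert, Finset.mem_singleton, not_or]
    constructor
    · intro hv
      by_cases h1 : v = p
      · subst h1; rw [hMp] at hv; exact absurd hv hpq.symm
      · by_cases h2 : v = q
        · subst h2; rw [hMq] at hv; exact absurd hv hpq
        · rw [hMo v h1 h2] at hv; exact ⟨hv, h1, h2⟩
    · rintro ⟨h1, h2, h3⟩; rw [hMo v h2 h3]; exact h1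
  have hpq_mem : p ∈ fixset M ∧ q ∈ fixset M := ⟨mem_fixset.mpr hp, mem_fixset.mpr hq⟩
  have hsub : {p, q} ⊆ fixset M := by
    intro v hv; simp only [Finset.mem_insert, Finset.mem_singleton] at hv
    rcases hv with h | h
    · exact h ▸ hpq_mem.1
    · exact h ▸ hpq_mem.2
  have hcard' : (fixset M').card = (fixset M).card - 2 := by
    rw [hfix, Finset.card_sdiff_of_subset hsub, Finset.card_pair hpq]
  have h2le : 2 ≤ (fixset M).card := by
    calc 2 = ({p, q} : Finset V).card := (Finset.card_pair hpq).symm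
    _ ≤ (fixset M).card := Finset.card_le_card hsub
  have := hmin M' ⟨hinv, hadj'⟩
  omega

/-- Surgery: if `q` and `r` are simultaneously exposed, `{x,y}` is a matched pair, and
`q ~ x`, `r ~ y`, then the matching can be enlarged: contradiction. -/
lemma surgery2 (hmin : ∀ f, IsMM G f → (fixset N).card ≤ (fixset f).card)
    {M : V → V} {x y q r : V} (hM : IsMM G M)
    (hc : (fixset M).card = (fixset N).card)
    (hq : M q = q) (hr : M r = r) (hmx : M x = y) (hxy : x ≠ y) (hqr : q ≠ r)
    (haq : G.Adj q x) (har : G.Adj r y) : False := by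
  classical
  have hyx : M y = x := by rw [← hmx, hM.1]
  have hqx : q ≠ x := by
    intro h; subst h; rw [hq] at hmx; exact hxy (hmx ▸ rfl)
  have hqy : q ≠ y := by
    intro h; subst h; rw [hq] at hyx; exact hxy hyx.symm
  have hrx : r ≠ x := by
    intro h; subst h; rw [hr] at hmx; exact hxy (hmx ▸ rfl)
  have hry : r ≠ y := by
    intro h; subst h; rw [hr] at hyx; exact hxy hyx.symm
  set M' : V → V := fun v => if v = x then q else if v = q then x
    else if v = y then r else if v = r then y else M v with hM'
  have e1 : M' x = q := by simp [hM']
  have e2 : M' q = x := by simp [hM', hqx.symm]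
  have e3 : M' y = r := by simp [hM', hxy.symm, hqy.symm]
  have e4 : M' r = y := by simp [hM', hrx, hqr.symm, hry]
  have hMo : ∀ v, v ≠ x → v ≠ q → v ≠ y → v ≠ r → M' v = M v := by
    intro v h1 h2 h3 h4; simp [hM', h1, h2, h3, h4]
  have hinv : ∀ v, M' (M' v) = v := by
    intro v
    by_cases h1 : v = x
    · subst h1; rw [e1, e2]
    · by_cases h2 : v = q
      · subst h2; rw [e2, e1]
      · by_cases h3 : v = y
        · subst h3; rw [e3, e4]
        · by_cases h4 : v = r
          · subst h4; rw [e4, e3]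
          · rw [hMo v h1 h2 h3 h4]
            have k1 : M v ≠ x := fun h => h3 (by rw [← hM.1 v, h, hmx])
            have k2 : M v ≠ q := fun h => h2 (by rw [← hM.1 v, h, hq])
            have k3 : M v ≠ y := fun h => h1 (by rw [← hM.1 v, h, hyx])
            have k4 : M v ≠ r := fun h => h4 (by rw [← hM.1 v, h, hr])
            rw [hMo _ k1 k2 k3 k4, hM.1]
  have hadj' : ∀ v, M' v ≠ v → G.Adj v (M' v) := by
    intro v hv
    by_cases h1 : v = x
    · subst h1; rw [e1]; exact haq.symm
    · by_cases h2 : v = q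
      · subst h2; rw [e2]; exact haq
      · by_cases h3 : v = y
        · subst h3; rw [e3]; exact har.symm
        · by_cases h4 : v = r
          · subst h4; rw [e4]; exact har
          · rw [hMo v h1 h2 h3 h4] at hv ⊢; exact hM.2 v hv
  have hfix : fixset M' = (fixset M) \ {q, r} := by
    ext v
    simp only [mem_fixset, Finset.mem_sdiff, Finset.mem_insert, Finset.mem_singleton, not_or]
    constructor
    · intro hv
      by_cases h1 : v = x
      · subst h1; rw [e1] at hv; exact absurd hv hqx
      · by_cases h2 : v = q
        · subst h2; rw [e2] at hv; exact absurd hv.symm hqx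
        · by_cases h3 : v = y
          · subst h3; rw [e3] at hv; exact absurd hv hry
          · by_cases h4 : v = r
            · subst h4; rw [e4] at hv; exact absurd hv.symm hry
            · rw [hMo v h1 h2 h3 h4] at hv; exact ⟨hv, h2, h4⟩
    · rintro ⟨h1, h2, h3⟩
      have h4 : v ≠ x := by
        intro h; subst h; rw [h1] at hmx; exact hxy hmx
      have h5 : v ≠ y := by
        intro h; subst h; rw [h1] at hyx; exact hxy hyx.symm
      rw [hMo v h4 h2 h5 h3]; exact h1
  have hsub : {q, r} ⊆ fixset M := by
    intro v hv; simp only [Finset.mem_insert, Finset.mem_singleton] at hv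
    rcases hv with h | h
    · exact h ▸ mem_fixset.mpr hq
    · exact h ▸ mem_fixset.mpr hr
  have hcard' : (fixset M').card = (fixset M).card - 2 := by
    rw [hfix, Finset.card_sdiff_of_subset hsub, Finset.card_pair hqr]
  have h2le : 2 ≤ (fixset M).card := by
    calc 2 = ({q, r} : Finset V).card := (Finset.card_pair hqr).symm
    _ ≤ (fixset M).card := Finset.card_le_card hsub
  have := hmin M' ⟨hinv, hadj'⟩
  omega


/-- The trivial flip at an uncovered vertex. -/
lemma base_flip (hN : IsMM G N) {s : V} (hs : N s = s) : IsFlip G N s {s} := by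
  refine ⟨Finset.mem_singleton_self s, ?_, ?_, N, hN, fun v _ => rfl, ?_, ?_⟩
  · intro v hv; rw [Finset.mem_singleton] at hv; rw [hv, hs]
    exact Finset.mem_singleton_self s
  · exact ⟨s, ⟨Finset.mem_singleton_self s, hs⟩, fun y hy => Finset.mem_singleton.mp hy.1⟩
  · intro v hv; rw [Finset.mem_singleton] at hv; rw [hv, hs]
    exact Finset.mem_singleton_self s
  · intro v hv; rw [Finset.mem_singleton] at hv
    constructor
    · intro _; exact hv
    · intro _; rw [hv, hs]

/-- Extending a flip for a toucher `q` of `x` across the matched pair `{x, y}` to expose `y`. -/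
lemma extend_flip (hN : IsMM G N) {k : ℕ} {A : Finset V} {q x y : V}
    (hflip : IsFlip G N q A) (hSB : SB G N k A) (hadj : G.Adj q x)
    (hmx : N x = y) (hxny : x ≠ y) (hxk : x ∉ Stage G N k) (hyk : y ∉ Stage G N k) :
    IsFlip G N y (A ∪ {x, y}) ∧ Disjoint A {x, y} := by
  classical
  obtain ⟨hqA, hNA, ⟨r, ⟨hrA, hrN⟩, hru⟩, M', hM', hM'o, hM'c, hM'f⟩ := hflip
  have hmy : N y = x := by rw [← hmx, hN.1]
  have hfresh : ∀ v ∈ A, v ≠ x ∧ v ≠ y := by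
    intro v hv
    constructor
    · rintro rfl
      rcases hSB v hv with h | h | h
      · rw [hmx] at h; exact hxny h.symm
      · exact hxk h
      · rw [hmx] at h; exact hyk h
    · rintro rfl
      rcases hSB v hv with h | h | h
      · rw [hmy] at h; exact hxny h
      · exact hyk h
      · rw [hmy] at h; exact hxk h
  have hdisj : Disjoint A {x, y} := by
    rw [Finset.disjoint_right]
    intro v hv
    simp only [Finset.mem_insert, Finset.mem_singleton] at hv
    intro hvA
    rcases hv with rfl | rfl
    · exact (hfresh v hvA).1 rfl
    · exact (hfresh v hvA).2 rfl
  have hxA : x ∉ A := fun h => (hfresh x h).1 rfl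
  have hyA : y ∉ A := fun h => (hfresh y h).2 rfl
  have hqx : q ≠ x := fun h => hxA (h ▸ hqA)
  have hqy : q ≠ y := fun h => hyA (h ▸ hqA)
  set A'' := A ∪ {x, y} with hA''
  have hxA'' : x ∈ A'' := by simp [hA'']
  have hyA'' : y ∈ A'' := by simp [hA'']
  have hmemA'' : ∀ v, v ∈ A'' ↔ v ∈ A ∨ v = x ∨ v = y := by
    intro v
    simp only [hA'', Finset.mem_union, Finset.mem_insert, Finset.mem_singleton]
  set M'' : V → V := fun v => if v = q then x else if v = x then q
    else if v = y then y else M' v with hM''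
  have f1 : M'' q = x := by simp [hM'']
  have f2 : M'' x = q := by simp [hM'', hqx.symm]
  have f3 : M'' y = y := by simp [hM'', hqy.symm, hxny.symm]
  have fo : ∀ v, v ≠ q → v ≠ x → v ≠ y → M'' v = M' v := by
    intro v h1 h2 h3; simp [hM'', h1, h2, h3]
  have hM'q : M' q = q := (hM'f q hqA).mpr rfl
  have key : ∀ v, v ≠ q → v ≠ x → v ≠ y → (M' v ≠ q ∧ M' v ≠ x ∧ M' v ≠ y) := by
    intro v h1 h2 h3
    by_cases hv : v ∈ A
    · have hc := hM'c v hv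
      refine ⟨fun h => h1 ?_, fun h => hxA (h ▸ hc), fun h => hyA (h ▸ hc)⟩
      rw [← hM'.1 v, h, hM'q]
    · rw [hM'o v hv]
      refine ⟨fun h => ?_, fun h => h3 ?_, fun h => h2 ?_⟩
      · have : v = N q := by rw [← h, hN.1]
        exact hv (this ▸ hNA q hqA)
      · rw [← hN.1 v, h, hmx]
      · rw [← hN.1 v, h, hmy]
  have hinv : ∀ v, M'' (M'' v) = v := by
    intro v
    by_cases h1 : v = q
    · subst h1; rw [f1, f2]
    · by_cases h2 : v = x
      · subst h2; rw [f2, f1]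
      · by_cases h3 : v = y
        · subst h3; rw [f3, f3]
        · rw [fo v h1 h2 h3]
          obtain ⟨k1, k2, k3⟩ := key v h1 h2 h3
          rw [fo _ k1 k2 k3, hM'.1]
  have hadj'' : ∀ v, M'' v ≠ v → G.Adj v (M'' v) := by
    intro v hv
    by_cases h1 : v = q
    · subst h1; rw [f1]; exact hadj
    · by_cases h2 : v = x
      · subst h2; rw [f2]; exact hadj.symm
      · by_cases h3 : v = y
        · subst h3; rw [f3] at hv; exact absurd rfl hv
        · rw [fo v h1 h2 h3] at hv ⊢; exact hM'.2 v hv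
  refine ⟨⟨hyA'', ?_, ⟨r, ⟨by simp [hA'', hrA], hrN⟩, ?_⟩,
    M'', ⟨hinv, hadj''⟩, ?_, ?_, ?_⟩, hdisj⟩
  · -- N-closed
    intro v hv
    rcases (hmemA'' v).mp hv with h | h | h
    · exact (hmemA'' _).mpr (Or.inl (hNA v h))
    · rw [h, hmx]; exact hyA''
    · rw [h, hmy]; exact hxA''
  · -- unique root
    rintro v ⟨hv, hvN⟩
    rcases (hmemA'' v).mp hv with h | h | h
    · exact hru v ⟨h, hvN⟩
    · exfalso; rw [h, hmx] at hvN; exact hxny hvN.symm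
    · exfalso; rw [h, hmy] at hvN; exact hxny hvN
  · -- agrees outside
    intro v hv
    rw [hmemA''] at hv
    push_neg at hv
    obtain ⟨hv1, hv2, hv3⟩ := hv
    have hq' : v ≠ q := fun h => hv1 (h ▸ hqA)
    rw [fo v hq' hv2 hv3, hM'o v hv1]
  · -- closed
    intro v hv
    rcases (hmemA'' v).mp hv with h | h | h
    · by_cases h1 : v = q
      · rw [h1, f1]; exact hxA''
      · have h2 : v ≠ x := (hfresh v h).1
        have h3 : v ≠ y := (hfresh v h).2
        rw [fo v h1 h2 h3]
        exact (hmemA'' _).mpr (Or.inl (hM'c v h))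
    · rw [h, f2]; exact (hmemA'' _).mpr (Or.inl hqA)
    · rw [h, f3]; exact hyA''
  · -- fixed iff
    intro v hv
    rcases (hmemA'' v).mp hv with h | h | h
    · by_cases h1 : v = q
      · rw [h1, f1]
        constructor
        · intro hxq; exact absurd hxq.symm hqx
        · intro h'; exact absurd h' hqy
      · have h2 : v ≠ x := (hfresh v h).1
        have h3 : v ≠ y := (hfresh v h).2
        rw [fo v h1 h2 h3]
        constructor
        · intro hfix; exact absurd ((hM'f v h).mp hfix) h1
        · intro h'; exact absurd h' h3
    · rw [h, f2]
      constructor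
      · intro h'; exact absurd h' hqx
      · intro h'; exact absurd h' hxny
    · rw [h, f3]


lemma F1_of_ML (hN : IsMM G N) (hmin : ∀ f, IsMM G f → (fixset N).card ≤ (fixset f).card)
    {k : ℕ} (ih : ML G N k) :
    ∀ a ∈ Stage G N k, ∀ b ∈ Stage G N k, a ≠ b → ¬ G.Adj a b := by
  intro a ha b hb hab hadj
  obtain ⟨A, A', fa, fb, hd, -, -⟩ := ih a ha b hb hab
  obtain ⟨M, hM, -, hMa, hMb, hcard⟩ := combined G N hN hd fa fb
  exact no_exposed_adjacent G N hmin hM hcard hMa hMb hab hadj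

lemma head_not_source (hN : IsMM G N)
    (hmin : ∀ f, IsMM G f → (fixset N).card ≤ (fixset f).card)
    {k : ℕ} {x a : V} (ih : ML G N k) (ha : a ∈ Stage G N k) (hax : G.Adj a x) :
    x ∉ Stage G N k := by
  intro hx
  exact F1_of_ML G N hN hmin ih a ha x hx hax.ne hax

lemma fresh_disjoint {k : ℕ} {A : Finset V} {x y : V} (hSBA : SB G N k A)
    (hxk : x ∉ Stage G N k) (hyk : y ∉ Stage G N k) (hmx : N x = y) (hmy : N y = x)
    (hxy : x ≠ y) : Disjoint A {x, y} := by
  rw [Finset.disjoint_right]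
  intro v hv hvA
  simp only [Finset.mem_insert, Finset.mem_singleton] at hv
  rcases hv with rfl | rfl
  · rcases hSBA v hvA with h | h | h
    · rw [hmx] at h; exact hxy h.symm
    · exact hxk h
    · rw [hmx] at h; exact hyk h
  · rcases hSBA v hvA with h | h | h
    · rw [hmy] at h; exact hxy h
    · exact hyk h
    · rw [hmy] at h; exact hxk h

lemma extend_case (hN : IsMM G N)
    (hmin : ∀ f, IsMM G f → (fixset N).card ≤ (fixset f).card)
    {k : ℕ} {s s' : V} (ih : ML G N k) (hs : s ∈ Stage G N k)
    (hs'new : s' ∉ Stage G N k) (hcov : N s' ≠ s')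
    {a b : V} (ha : a ∈ Stage G N k) (hb : b ∈ Stage G N k) (hab : a ≠ b)
    (hax : G.Adj a (N s')) (hbx : G.Adj b (N s')) (hss' : s ≠ s') :
    ∃ A A', IsFlip G N s A ∧ IsFlip G N s' A' ∧ Disjoint A A' ∧
      SB G N (k+1) A ∧ SB G N (k+1) A' := by
  set x := N s' with hx
  have hmx : N x = s' := hN.1 s'
  have hxs' : x ≠ s' := hcov
  have hxk : x ∉ Stage G N k := head_not_source G N hN hmin ih ha hax
  obtain ⟨q, hq, hqs, hqx⟩ : ∃ q, q ∈ Stage G N k ∧ q ≠ s ∧ G.Adj q x := by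
    by_cases h : a = s
    · exact ⟨b, hb, fun hbs => hab (by rw [h, hbs]), hbx⟩
    · exact ⟨a, ha, h, hax⟩
  obtain ⟨A, A', fS, fQ, hd, sb1, sb2⟩ := ih s hs q hq (Ne.symm hqs)
  obtain ⟨fS', -⟩ := extend_flip G N hN fQ sb2 hqx hmx hxs' hxk hs'new
  have hs'1 : s' ∈ Stage G N (k+1) :=
    Stage_succ_of_touched G N ha hb hab hax hbx hcov
  refine ⟨A, A' ∪ {x, s'}, fS, fS', ?_, SB_mono G N (Nat.le_succ k) sb1, ?_⟩
  · rw [Finset.disjoint_union_right]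
    exact ⟨hd, fresh_disjoint G N sb1 hxk hs'new hmx hx.symm hxs'⟩
  · intro v hv
    rcases Finset.mem_union.mp hv with h | h
    · exact SB_mono G N (Nat.le_succ k) sb2 v h
    · simp only [Finset.mem_insert, Finset.mem_singleton] at h
      rcases h with rfl | rfl
      · exact Or.inr (Or.inr (hmx ▸ hs'1))
      · exact Or.inr (Or.inl hs'1)

theorem ML_holds (hN : IsMM G N)
    (hmin : ∀ f, IsMM G f → (fixset N).card ≤ (fixset f).card) :
    ∀ k, ML G N k := by
  intro k
  induction k with
  | zero =>
    intro s hs s' hs' hss'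
    have h1 : N s = s := by
      have : s ∈ fixset N := hs
      exact mem_fixset.mp this
    have h2 : N s' = s' := by
      have : s' ∈ fixset N := hs'
      exact mem_fixset.mp this
    refine ⟨{s}, {s'}, base_flip G N hN h1, base_flip G N hN h2, Finset.disjoint_singleton.mpr hss', ?_, ?_⟩
    · intro v hv; rw [Finset.mem_singleton] at hv; rw [hv]; exact Or.inl h1
    · intro v hv; rw [Finset.mem_singleton] at hv; rw [hv]; exact Or.inl h2
  | succ k ih =>
    intro s hs s' hs' hss'
    by_cases hA : s ∈ Stage G N k <;> by_cases hB : s' ∈ Stage G N k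
    · obtain ⟨A, A', fa, fb, hd, sb1, sb2⟩ := ih s hA s' hB hss'
      exact ⟨A, A', fa, fb, hd, SB_mono G N (Nat.le_succ k) sb1,
        SB_mono G N (Nat.le_succ k) sb2⟩
    · rcases mem_Stage_succ G N hs' with h2 | h2
      · exact absurd h2 hB
      · obtain ⟨hcov, a, ha, b, hb, hab, hax, hbx⟩ := h2
        exact extend_case G N hN hmin ih hA hB hcov ha hb hab hax hbx hss'
    · rcases mem_Stage_succ G N hs with h1 | h1
      · exact absurd h1 hA
      · obtain ⟨hcov, a, ha, b, hb, hab, hax, hbx⟩ := h1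
        obtain ⟨A, A', f1, f2, hd, sb1, sb2⟩ :=
          extend_case G N hN hmin ih hB hA hcov ha hb hab hax hbx (Ne.symm hss')
        exact ⟨A', A, f2, f1, hd.symm, sb2, sb1⟩
    · -- both fresh
      rcases mem_Stage_succ G N hs with h1 | h1
      · exact absurd h1 hA
      rcases mem_Stage_succ G N hs' with h2 | h2
      · exact absurd h2 hB
      obtain ⟨hcov2, a2, ha2, b2, hb2, hab2, hax2, hbx2⟩ := h1
      obtain ⟨hcov, a, ha, b, hb, hab, hax, hbx⟩ := h2
      have hs1 : s ∈ Stage G N (k+1) := hs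
      have hs'1 : s' ∈ Stage G N (k+1) := hs'
      by_cases hpair : N s = s'
      · -- pair-equal: impossible
        exfalso
        have hxeq : N s' = s := by rw [← hpair, hN.1]
        obtain ⟨q, r, hqm, hrm, hqr, hqadj, hradj⟩ :
            ∃ q r, q ∈ Stage G N k ∧ r ∈ Stage G N k ∧ q ≠ r ∧
              G.Adj q s ∧ G.Adj r s' := by
          -- touchers a,b are adjacent to N s' = s; touchers a2,b2 adjacent to N s = s'
          by_cases h : a = a2
          · exact ⟨a, b2, ha, hb2, fun hh => hab2 (by rw [← hh, h]),
              hxeq ▸ hax, hpair ▸ hbx2⟩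
          · exact ⟨a, a2, ha, ha2, h, hxeq ▸ hax, hpair ▸ hax2⟩
        obtain ⟨A, A', fq, fr, hd, sb1, sb2⟩ := ih q hqm r hrm hqr
        obtain ⟨M, hM, hMout, hMq, hMr, hcard⟩ := combined G N hN hd fq fr
        have hsout : s ∉ A ∪ A' := by
          intro hmem
          have hsb : N s = s ∨ s ∈ Stage G N k ∨ N s ∈ Stage G N k := by
            rcases Finset.mem_union.mp hmem with h | h
            · exact sb1 s h
            · exact sb2 s h
          rcases hsb with h | h | h
          · exact hcov2 h
          · exact hA h
          · rw [hpair] at h; exact hB h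
        have hMs : M s = s' := by rw [hMout s hsout, hpair]
        exact surgery2 G N hmin hM hcard hMq hMr hMs hss' hqr hqadj hradj
      · -- distinct pairs
        set x := N s' with hxdef
        set x2 := N s with hx2def
        have hmx : N x = s' := hN.1 s'
        have hmx2 : N x2 = s := hN.1 s
        have hxs' : x ≠ s' := hcov
        have hx2s : x2 ≠ s := hcov2
        have hxk : x ∉ Stage G N k := head_not_source G N hN hmin ih ha hax
        have hx2k : x2 ∉ Stage G N k := head_not_source G N hN hmin ih ha2 hax2
        obtain ⟨q, hq, hqx⟩ : ∃ q, q ∈ Stage G N k ∧ G.Adj q x := ⟨a, ha, hax⟩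
        obtain ⟨q2, hq2, hq2q, hq2x2⟩ :
            ∃ q2, q2 ∈ Stage G N k ∧ q2 ≠ q ∧ G.Adj q2 x2 := by
          by_cases h : a2 = q
          · exact ⟨b2, hb2, fun hh => hab2 (by rw [hh, ← h]), hbx2⟩
          · exact ⟨a2, ha2, h, hax2⟩
        obtain ⟨A2, A1, f2, f1, hd, sb2, sb1⟩ := ih q2 hq2 q hq hq2q
        obtain ⟨fS', -⟩ := extend_flip G N hN f1 sb1 hqx hmx hxs' hxk hB
        obtain ⟨fS, -⟩ := extend_flip G N hN f2 sb2 hq2x2 hmx2 hx2s hx2k hA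
        have hd1 : Disjoint A2 {x, s'} := fresh_disjoint G N sb2 hxk hB hmx hxdef.symm hxs'
        have hd2 : Disjoint A1 {x2, s} := fresh_disjoint G N sb1 hx2k hA hmx2 hx2def.symm hx2s
        have e1 : x2 ≠ x := fun h => hss' (by rw [← hmx2, h, hmx])
        have e2 : x2 ≠ s' := hpair
        have e3 : s ≠ x := fun h => hpair (by rw [hx2def, h]; exact hmx)
        have hdp : Disjoint ({x2, s} : Finset V) ({x, s'} : Finset V) := by
          rw [Finset.disjoint_left]
          intro v hv hv'
          simp only [Finset.mem_insert, Finset.mem_singleton] at hv hv'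
          rcases hv with h1 | h1 <;> rcases hv' with h2 | h2
          · exact e1 (h1.symm.trans h2)
          · exact e2 (h1.symm.trans h2)
          · exact e3 (h1.symm.trans h2)
          · exact hss' (h1.symm.trans h2)
        refine ⟨A2 ∪ {x2, s}, A1 ∪ {x, s'}, fS, fS', ?_, ?_, ?_⟩
        · rw [Finset.disjoint_union_left]
          constructor
          · rw [Finset.disjoint_union_right]
            exact ⟨hd, hd1⟩
          · rw [Finset.disjoint_union_right]
            exact ⟨hd2.symm, hdp⟩
        · intro v hv
          rcases Finset.mem_union.mp hv with h | h
          · exact SB_mono G N (Nat.le_succ k) sb2 v h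
          · simp only [Finset.mem_insert, Finset.mem_singleton] at h
            rcases h with rfl | rfl
            · exact Or.inr (Or.inr (hmx2 ▸ hs1))
            · exact Or.inr (Or.inl hs1)
        · intro v hv
          rcases Finset.mem_union.mp hv with h | h
          · exact SB_mono G N (Nat.le_succ k) sb1 v h
          · simp only [Finset.mem_insert, Finset.mem_singleton] at h
            rcases h with rfl | rfl
            · exact Or.inr (Or.inr (hmx ▸ hs'1))
            · exact Or.inr (Or.inl hs'1)

end Surgery

end S12

open S12

/-- for every `ε > 0` there is `n₀` such that the vertex set of every graph
`G` on `n ≥ n₀` vertices can be partitioned into `Z`, `B`, `C`, `D` such that `G[Z]` has a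
perfect matching, `G` contains a perfect matching between `C` and `D`, and the number of
edges of `G` with one endpoint in `B ∪ D` and the other in `Z ∪ B ∪ D` is at most `εn²`. -/
theorem statement12 (ε : ℝ) (hε : 0 < ε) :
    ∃ n₀ : ℕ, ∀ n : ℕ, n₀ ≤ n →
      ∀ (V : Type) [Fintype V] [DecidableEq V], Fintype.card V = n →
        ∀ (G : SimpleGraph V) [DecidableRel G.Adj],
          ∃ Z B C D : Finset V,
            Z ∪ B ∪ C ∪ D = Finset.univ ∧
            Disjoint Z B ∧ Disjoint Z C ∧ Disjoint Z D ∧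
            Disjoint B C ∧ Disjoint B D ∧ Disjoint C D ∧
            (∃ m : V → V, ∀ v ∈ Z, m v ∈ Z ∧ m v ≠ v ∧ G.Adj v (m v) ∧ m (m v) = v) ∧
            (C.card = D.card ∧
              ∃ f : V → V, Set.InjOn f C ∧ ∀ v ∈ C, f v ∈ D ∧ G.Adj v (f v)) ∧
            ((G.edgeFinset.filter fun e =>
                ∃ u ∈ B ∪ D, ∃ v ∈ Z ∪ B ∪ D, e = s(u, v)).card : ℝ) ≤ ε * n ^ 2 := by
  classical
  refine ⟨⌈ε⁻¹⌉₊, fun n hn V _ _ hcard G _ => ?_⟩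
  obtain ⟨N, hNmem, hNmin⟩ := Finset.exists_min_image
    ((Finset.univ : Finset (V → V)).filter (fun f => IsMM G f))
    (fun f => (fixset f).card)
    ⟨id, by simp only [Finset.mem_filter, Finset.mem_univ, true_and]; exact isMM_id G⟩
  rw [Finset.mem_filter] at hNmem
  have hN : IsMM G N := hNmem.2
  have hmin : ∀ f, IsMM G f → (fixset N).card ≤ (fixset f).card := by
    intro f hf
    exact hNmin f (by simp only [Finset.mem_filter, Finset.mem_univ, true_and]; exact hf)
  set SRC := Stage G N (Fintype.card V) with hSRC
  have hML := ML_holds G N hN hmin (Fintype.card V)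
  have F1 : ∀ a ∈ SRC, ∀ b ∈ SRC, a ≠ b → ¬ G.Adj a b :=
    F1_of_ML G N hN hmin hML
  have hclosure : ∀ z : V, N z ≠ z → ∀ u₁ ∈ SRC, ∀ u₂ ∈ SRC, u₁ ≠ u₂ →
      G.Adj u₁ z → G.Adj u₂ z → N z ∈ SRC := by
    intro z hz u₁ h₁ u₂ h₂ h12 ha1 ha2
    have hNz : N (N z) = z := hN.1 z
    have hmem : N z ∈ Stage G N (Fintype.card V + 1) := by
      apply Stage_succ_of_touched G N h₁ h₂ h12
      · rw [hNz]; exact ha1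
      · rw [hNz]; exact ha2
      · rw [hNz]; exact fun h => hz h.symm
    rwa [Stage_stabilizes G N] at hmem
  set B : Finset V := Finset.univ.filter (fun v => N v = v) with hBdef
  set D : Finset V := Finset.univ.filter (fun v => v ∈ SRC ∧ N v ≠ v) with hDdef
  set C : Finset V := D.image N with hCdef
  set Z : Finset V := Finset.univ \ (B ∪ C ∪ D) with hZdef
  have hNinj : Function.Injective N := by
    intro a b h
    rw [← hN.1 a, h, hN.1 b]
  have hBD : ∀ v, v ∈ B ∪ D ↔ v ∈ SRC := by
    intro v
    simp only [hBdef, hDdef, Finset.mem_union, Finset.mem_filter, Finset.mem_univ, true_and]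
    constructor
    · rintro (h | h)
      · have h0 : v ∈ Stage G N 0 := mem_fixset.mpr h
        exact Stage_mono G N (Nat.zero_le _) h0
      · exact h.1
    · intro h
      by_cases hv : N v = v
      · exact Or.inl hv
      · exact Or.inr ⟨h, hv⟩
  have hCcov : ∀ c ∈ C, N c ≠ c ∧ N c ∈ D := by
    intro c hc
    rw [hCdef, Finset.mem_image] at hc
    obtain ⟨d, hd, hdc⟩ := hc
    have hd' := hd
    rw [hDdef, Finset.mem_filter] at hd'
    have hNc : N c = d := by rw [← hdc, hN.1]
    constructor
    · intro h
      rw [hNc] at h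
      rw [← hdc] at h
      exact hd'.2.2 h.symm
    · rw [hNc]; exact hd
  have hCnotSRC : ∀ c ∈ C, c ∉ SRC := by
    intro c hc hcS
    obtain ⟨hccov, hNcD⟩ := hCcov c hc
    have hNcS : N c ∈ SRC := (hBD (N c)).mp (Finset.mem_union_right _ hNcD)
    exact F1 c hcS (N c) hNcS (fun h => hccov h.symm) (hN.2 c hccov)
  have hZB : Disjoint Z B := by
    rw [hZdef, Finset.disjoint_right]
    intro v hv
    simp only [Finset.mem_sdiff, Finset.mem_union, not_or]
    intro h; exact h.2.1.1 hv
  have hZC : Disjoint Z C := by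
    rw [hZdef, Finset.disjoint_right]
    intro v hv
    simp only [Finset.mem_sdiff, Finset.mem_union, not_or]
    intro h; exact h.2.1.2 hv
  have hZD : Disjoint Z D := by
    rw [hZdef, Finset.disjoint_right]
    intro v hv
    simp only [Finset.mem_sdiff, Finset.mem_union, not_or]
    intro h; exact h.2.2 hv
  have hBC : Disjoint B C := by
    rw [Finset.disjoint_left]
    intro v hv hv'
    rw [hBdef, Finset.mem_filter] at hv
    exact (hCcov v hv').1 hv.2
  have hBD' : Disjoint B D := by
    rw [Finset.disjoint_left]
    intro v hv hv'
    rw [hBdef, Finset.mem_filter] at hv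
    rw [hDdef, Finset.mem_filter] at hv'
    exact hv'.2.2 hv.2
  have hCD : Disjoint C D := by
    rw [Finset.disjoint_left]
    intro v hv hv'
    exact hCnotSRC v hv ((hBD v).mp (Finset.mem_union_right _ hv'))
  have hunion : Z ∪ B ∪ C ∪ D = Finset.univ := by
    rw [hZdef]
    ext v
    simp only [Finset.mem_union, Finset.mem_sdiff, Finset.mem_univ, true_and, iff_true]
    tauto
  refine ⟨Z, B, C, D, hunion, hZB, hZC, hZD, hBC, hBD', hCD, ?_, ?_, ?_⟩
  · -- perfect matching inside Z
    refine ⟨N, fun v hv => ?_⟩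
    have hvZ := hv
    rw [hZdef, Finset.mem_sdiff] at hvZ
    obtain ⟨-, hvn⟩ := hvZ
    simp only [Finset.mem_union, not_or] at hvn
    obtain ⟨⟨hvB, hvC⟩, hvD⟩ := hvn
    have hcov : N v ≠ v := by
      intro h
      exact hvB (by rw [hBdef, Finset.mem_filter]; exact ⟨Finset.mem_univ v, h⟩)
    refine ⟨?_, hcov, hN.2 v hcov, hN.1 v⟩
    rw [hZdef, Finset.mem_sdiff]
    refine ⟨Finset.mem_univ _, ?_⟩
    simp only [Finset.mem_union, not_or]
    refine ⟨⟨?_, ?_⟩, ?_⟩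
    · intro h
      rw [hBdef, Finset.mem_filter] at h
      have h2 := h.2
      rw [hN.1 v] at h2
      exact hcov h2.symm
    · intro h
      rw [hCdef, Finset.mem_image] at h
      obtain ⟨d, hd, hdv⟩ := h
      exact hvD (hNinj hdv ▸ hd)
    · intro h
      exact hvC (by rw [hCdef, Finset.mem_image]; exact ⟨N v, h, hN.1 v⟩)
  · -- matching between C and D
    constructor
    · rw [hCdef]
      exact Finset.card_image_of_injective D hNinj
    · refine ⟨N, fun a _ b _ h => hNinj h, fun v hv => ?_⟩
      obtain ⟨hcov, hND⟩ := hCcov v hv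
      exact ⟨hND, hN.2 v hcov⟩
  · -- edge count
    set T := G.edgeFinset.filter
      (fun e => ∃ u ∈ B ∪ D, ∃ v ∈ Z ∪ B ∪ D, e = s(u, v)) with hT
    have hchar : ∀ e ∈ T, ∃ u z, u ∈ SRC ∧ z ∈ Z ∧ G.Adj u z ∧ e = s(u, z) := by
      intro e he
      rw [hT, Finset.mem_filter] at he
      obtain ⟨hedge, u, hu, v, hv, huv⟩ := he
      have hadj : G.Adj u v := by
        rw [SimpleGraph.mem_edgeFinset, huv] at hedge
        exact hedge
      have huS : u ∈ SRC := (hBD u).mp hu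
      have hvZ : v ∈ Z := by
        rcases Finset.mem_union.mp hv with h | h
        · rcases Finset.mem_union.mp h with h' | h'
          · exact h'
          · exact absurd hadj
              (F1 u huS v ((hBD v).mp (Finset.mem_union_left _ h')) hadj.ne)
        · exact absurd hadj
            (F1 u huS v ((hBD v).mp (Finset.mem_union_right _ h)) hadj.ne)
      exact ⟨u, v, huS, hvZ, hadj, huv⟩
    have huniq : ∀ z ∈ Z, ∀ u₁ ∈ SRC, ∀ u₂ ∈ SRC, G.Adj u₁ z → G.Adj u₂ z → u₁ = u₂ := by
      intro z hz u₁ h₁ u₂ h₂ ha1 ha2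
      by_contra hne
      have hzB : N z ≠ z := by
        intro h
        have hzZ := hz
        rw [hZdef, Finset.mem_sdiff] at hzZ
        simp only [Finset.mem_union, not_or] at hzZ
        exact hzZ.2.1.1 (by rw [hBdef, Finset.mem_filter]; exact ⟨Finset.mem_univ z, h⟩)
      have hNzS : N z ∈ SRC := hclosure z hzB u₁ h₁ u₂ h₂ hne ha1 ha2
      have hcov2 : N (N z) ≠ N z := by
        rw [hN.1]; exact fun h => hzB h.symm
      have hNzD : N z ∈ D := by
        rw [hDdef, Finset.mem_filter]
        exact ⟨Finset.mem_univ _, hNzS, hcov2⟩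
      have hzC : z ∈ C := by
        rw [hCdef, Finset.mem_image]
        exact ⟨N z, hNzD, hN.1 z⟩
      exact (Finset.disjoint_left.mp hZC hz) hzC
    set g : V → Sym2 V := fun z =>
      if h : ∃ u, u ∈ SRC ∧ G.Adj u z then s(h.choose, z) else s(z, z) with hg
    have hTsub : T ⊆ Z.image g := by
      intro e he
      obtain ⟨u, z, huS, hzZ, hadj, hrep⟩ := hchar e he
      rw [Finset.mem_image]
      refine ⟨z, hzZ, ?_⟩
      have hex : ∃ u', u' ∈ SRC ∧ G.Adj u' z := ⟨u, huS, hadj⟩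
      rw [hg]
      dsimp only
      rw [dif_pos hex]
      have hcu := hex.choose_spec
      have heq : hex.choose = u := huniq z hzZ _ hcu.1 u huS hcu.2 hadj
      rw [heq, hrep]
    have hTcard : T.card ≤ n := by
      calc T.card ≤ (Z.image g).card := Finset.card_le_card hTsub
        _ ≤ Z.card := Finset.card_image_le
        _ ≤ (Finset.univ : Finset V).card := Finset.card_le_card (Finset.subset_univ Z)
        _ = n := by rw [Finset.card_univ, hcard]
    have h1 : (T.card : ℝ) ≤ (n : ℝ) := by exact_mod_cast hTcard
    have h2 : (n : ℝ) ≤ ε * (n : ℝ) ^ 2 := by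
      rcases Nat.eq_zero_or_pos n with rfl | hnpos
      · simp
      · have hn' : (ε⁻¹ : ℝ) ≤ (n : ℝ) := le_trans (Nat.le_ceil ε⁻¹) (by exact_mod_cast hn)
        have hnn : (0:ℝ) < (n : ℝ) := by exact_mod_cast hnpos
        rw [pow_two]
        calc (n:ℝ) = 1 * n := (one_mul _).symm
          _ ≤ (ε * n) * n := by
              apply mul_le_mul_of_nonneg_right _ hnn.le
              calc (1:ℝ) = ε * ε⁻¹ := (mul_inv_cancel₀ (ne_of_gt hε)).symm
                _ ≤ ε * n := mul_le_mul_of_nonneg_left hn' hε.le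
          _ = ε * (n * n) := by ring
    exact h1.trans h2
end

section
/- For each integer r ≥ 2 and each degenerate r-graph 𝒢, there exists c > 0 and n₀ such that for all n ≥ n₀, every r-graph H on n vertices with |E(H)| ≥ n^{r−c} contains a copy of 𝒢 as a subgraph; that is, there is an injective map φ from the vertex set of 𝒢 to the vertex set of H such that φ(e) ∈ E(H) for every edge e of 𝒢. -/
open Finset

set_option linter.unusedSectionVars false
set_option maxHeartbeats 1000000

section Aux

variable {V : Type} [Fintype V] [DecidableEq V]

noncomputable def boxSum (t r : ℕ) (A : (Fin r → V) → ℝ) : ℝ :=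
  ∑ f : Fin r → Fin t → V, ∏ g : Fin r → Fin t, A (fun i => f i (g i))

lemma boxSum_nonneg (t r : ℕ) (A : (Fin r → V) → ℝ) (hA : ∀ x, 0 ≤ A x) :
    0 ≤ boxSum t r A :=
  Finset.sum_nonneg fun _ _ => Finset.prod_nonneg fun _ _ => hA _

lemma jensen {ι : Type*} [Fintype ι] (f : ι → ℝ) (hf : ∀ i, 0 ≤ f i) (k : ℕ) :
    (∑ i, f i) ^ (k + 1) ≤ (∑ i, f i ^ (k + 1)) * (Fintype.card ι : ℝ) ^ k := by
  obtain (h | h) := isEmpty_or_nonempty ι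
  · simp
  · have hcard : (0:ℝ) < (Fintype.card ι : ℝ) := by exact_mod_cast Fintype.card_pos
    have h2 := pow_sum_div_card_le_sum_pow (s := (univ : Finset ι)) (f := f)
      (fun i _ => hf i) k
    rw [Finset.card_univ] at h2
    calc (∑ i, f i) ^ (k+1)
        = (∑ i, f i) ^ (k+1) / (Fintype.card ι : ℝ) ^ k * (Fintype.card ι : ℝ) ^ k := by
          field_simp
      _ ≤ _ := mul_le_mul_of_nonneg_right h2 (by positivity)

lemma box_lb [Nonempty V] (t : ℕ) (ht : 1 ≤ t) :
    ∀ (r : ℕ) (A : (Fin r → V) → ℝ), (∀ x, 0 ≤ A x) →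
      (∑ x, A x) ^ (t ^ r) * (Fintype.card V : ℝ) ^ (r * t) ≤
        boxSum t r A * (Fintype.card V : ℝ) ^ (r * t ^ r) := by
  obtain ⟨u, rfl⟩ : ∃ u, t = u + 1 := ⟨t - 1, by omega⟩
  set t := u + 1 with htdef
  intro r
  induction r with
  | zero =>
      intro A hA
      simp only [pow_zero, pow_one, Nat.zero_mul, mul_one, boxSum]
      rw [Fintype.sum_unique, Fintype.sum_unique, Fintype.prod_unique]
      exact le_of_eq (congrArg A (Subsingleton.elim _ _))
  | succ r IH =>
      intro A hA
      set N : ℝ := (Fintype.card V : ℝ) with hNdef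
      have hN1 : (1:ℝ) ≤ N := by
        have := Fintype.card_pos (α := V); rw [hNdef]; exact_mod_cast this
      have hN0 : (0:ℝ) < N := lt_of_lt_of_le zero_lt_one hN1
      -- subarray and degree functions
      set B : (Fin t → V) → (Fin r → V) → ℝ :=
        fun f y => ∏ j : Fin t, A (Fin.cons (f j) y) with hBdef
      have hBnn : ∀ f y, 0 ≤ B f y := fun f y => Finset.prod_nonneg fun _ _ => hA _
      set d : (Fin r → V) → ℝ := fun y => ∑ v : V, A (Fin.cons v y) with hddef
      have hdnn : ∀ y, 0 ≤ d y := fun y => Finset.sum_nonneg fun _ _ => hA _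
      -- (i) split of boxSum
      have hsplit : boxSum t (r+1) A = ∑ f : Fin t → V, boxSum t r (B f) := by
        rw [boxSum, ← (Fin.consEquiv (fun _ : Fin (r+1) => Fin t → V)).sum_comp,
          Fintype.sum_prod_type]
        refine Finset.sum_congr rfl fun f _ => ?_
        rw [boxSum]
        refine Finset.sum_congr rfl fun F' _ => ?_
        rw [← (Fin.consEquiv (fun _ : Fin (r+1) => Fin t)).prod_comp,
          Fintype.prod_prod_type, Finset.prod_comm]
        refine Finset.prod_congr rfl fun g' _ => ?_
        simp only [hBdef]
        refine Finset.prod_congr rfl fun j _ => ?_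
        congr 1
        funext i
        refine Fin.cases ?_ (fun i => ?_) i <;>
          simp [Fin.consEquiv]
      -- (ii) row sums
      have hby : ∀ y : Fin r → V, (∑ f : Fin t → V, B f y) = (d y) ^ t := by
        intro y
        have h1 : (d y) ^ t = ∏ _j : Fin t, d y := by
          rw [Finset.prod_const, Finset.card_univ, Fintype.card_fin]
        rw [h1]
        simp only [hddef, hBdef]
        rw [Finset.prod_univ_sum, Fintype.piFinset_univ]
      have hS2 : ∑ f : Fin t → V, (∑ y : Fin r → V, B f y) = ∑ y : Fin r → V, (d y) ^ t := by
        rw [Finset.sum_comm]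
        exact Finset.sum_congr rfl fun y _ => hby y
      -- (iii) total sum
      have hmd : ∑ x : Fin (r+1) → V, A x = ∑ y : Fin r → V, d y := by
        rw [← (Fin.consEquiv (fun _ : Fin (r+1) => V)).sum_comp, Fintype.sum_prod_type,
          Finset.sum_comm]
        exact Finset.sum_congr rfl fun y _ => by simp [hddef, Fin.consEquiv]
      -- Jensen applications
      obtain ⟨b, hb⟩ : ∃ b, t ^ r = b + 1 := ⟨t ^ r - 1, by
        have : 1 ≤ t ^ r := Nat.one_le_pow _ _ (by omega)
        omega⟩
      have hcardfun : ∀ s : ℕ, ((Fintype.card (Fin s → V) : ℝ)) = N ^ s := by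
        intro s
        rw [Fintype.card_fun, Fintype.card_fin, hNdef]
        push_cast
        ring
      have J1 : (∑ x : Fin (r+1) → V, A x) ^ t ≤ (∑ y : Fin r → V, (d y) ^ t) * N ^ (r * u) := by
        have h := jensen d hdnn u
        rw [hcardfun r, ← pow_mul] at h
        rw [hmd]
        exact h
      have J2 : (∑ y : Fin r → V, (d y) ^ t) ^ (t ^ r) ≤
          (∑ f : Fin t → V, (∑ y : Fin r → V, B f y) ^ (t ^ r)) * N ^ (t * b) := by
        have h := jensen (fun f : Fin t → V => ∑ y : Fin r → V, B f y)
          (fun f => Finset.sum_nonneg fun y _ => hBnn f y) b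
        rw [hcardfun t, ← pow_mul, hS2] at h
        rw [hb]
        exact h
      have IHsum : (∑ f : Fin t → V, (∑ y : Fin r → V, B f y) ^ (t ^ r)) * N ^ (r * t) ≤
          (∑ f : Fin t → V, boxSum t r (B f)) * N ^ (r * t ^ r) := by
        rw [Finset.sum_mul, Finset.sum_mul]
        exact Finset.sum_le_sum fun f _ => IH (B f) (hBnn f)
      have hmnn : (0:ℝ) ≤ ∑ x : Fin (r+1) → V, A x := Finset.sum_nonneg fun _ _ => hA _
      have hS1nn : (0:ℝ) ≤ ∑ y : Fin r → V, (d y) ^ t :=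
        Finset.sum_nonneg fun y _ => pow_nonneg (hdnn y) t
      have hPnn : (0:ℝ) ≤ ∑ f : Fin t → V, (∑ y : Fin r → V, B f y) ^ (t ^ r) :=
        Finset.sum_nonneg fun f _ => pow_nonneg (Finset.sum_nonneg fun y _ => hBnn f y) _
      have key1 : (∑ x : Fin (r+1) → V, A x) ^ (t ^ (r+1)) ≤
          (∑ f : Fin t → V, (∑ y : Fin r → V, B f y) ^ (t ^ r)) * N ^ (t * b + r * u * t ^ r) := by
        have e1 : (∑ x : Fin (r+1) → V, A x) ^ (t ^ (r+1)) =
            ((∑ x : Fin (r+1) → V, A x) ^ t) ^ (t ^ r) := by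
          rw [← pow_mul, pow_succ']
        rw [e1]
        calc ((∑ x : Fin (r+1) → V, A x) ^ t) ^ (t ^ r)
            ≤ ((∑ y : Fin r → V, (d y) ^ t) * N ^ (r * u)) ^ (t ^ r) :=
              pow_le_pow_left₀ (pow_nonneg hmnn t) J1 _
          _ = (∑ y : Fin r → V, (d y) ^ t) ^ (t ^ r) * N ^ (r * u * t ^ r) := by
              rw [mul_pow, ← pow_mul]
          _ ≤ ((∑ f : Fin t → V, (∑ y : Fin r → V, B f y) ^ (t ^ r)) * N ^ (t * b)) *
                N ^ (r * u * t ^ r) :=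
              mul_le_mul_of_nonneg_right J2 (by positivity)
          _ = _ := by rw [mul_assoc, ← pow_add]
      rw [hsplit]
      set P : ℝ := ∑ f : Fin t → V, (∑ y : Fin r → V, B f y) ^ (t ^ r) with hPdef
      set Q : ℝ := ∑ f : Fin t → V, boxSum t r (B f) with hQdef
      calc (∑ x : Fin (r+1) → V, A x) ^ (t ^ (r+1)) * N ^ ((r+1) * t)
          ≤ (P * N ^ (t * b + r * u * t ^ r)) * N ^ ((r+1) * t) :=
            mul_le_mul_of_nonneg_right key1 (by positivity)
        _ = (P * N ^ (r * t)) * N ^ (t * b + r * u * t ^ r + t) := by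
            rw [mul_assoc P, mul_assoc P, ← pow_add, ← pow_add]
            congr 2
            ring
        _ ≤ (Q * N ^ (r * t ^ r)) * N ^ (t * b + r * u * t ^ r + t) :=
            mul_le_mul_of_nonneg_right IHsum (by positivity)
        _ = Q * N ^ ((r+1) * t ^ (r+1)) := by
            rw [mul_assoc Q, ← pow_add]
            congr 2
            rw [pow_succ, hb, htdef]
            ring





lemma noninj_card (D : Type) [Fintype D] [DecidableEq D] :
    ((univ.filter fun h : D → V => ¬ Function.Injective h).card : ℝ) ≤
      ((Fintype.card D : ℝ))^2 * (Fintype.card V : ℝ) ^ (Fintype.card D - 1) := by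
  classical
  have hpq : ∀ p q : D, p ≠ q → (univ.filter fun h : D → V => h p = h q).card ≤
      Fintype.card V ^ (Fintype.card D - 1) := by
    intro p q hne
    have hc : Fintype.card V ^ (Fintype.card D - 1) = Fintype.card ({x : D // x ≠ q} → V) := by
      rw [Fintype.card_fun]
      congr 1
      have := Fintype.card_subtype_compl (p := fun x : D => x = q)
      simp only [Fintype.card_subtype_eq] at this
      exact this.symm
    rw [hc, ← Finset.card_univ]
    apply Finset.card_le_card_of_injOn (fun h (x : {x : D // x ≠ q}) => h x.1)
    · intro _ _; exact mem_univ _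
    · intro h1 h1m h2 h2m hres
      simp only [coe_filter, mem_univ, true_and, Set.mem_setOf_eq] at h1m h2m
      funext x
      by_cases hx : x = q
      · subst hx
        have hp : h1 p = h2 p := congrFun hres ⟨p, hne⟩
        rw [← h1m, ← h2m, hp]
      · exact congrFun hres ⟨x, hx⟩
  have hsub : (univ.filter fun h : D → V => ¬ Function.Injective h) ⊆
      (univ.filter fun pq : D × D => pq.1 ≠ pq.2).biUnion
        (fun pq => univ.filter fun h : D → V => h pq.1 = h pq.2) := by
    intro h hh
    simp only [mem_filter, mem_univ, true_and] at hh
    rw [Function.not_injective_iff] at hh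
    obtain ⟨a, b, hab, hne⟩ := hh
    simp only [mem_biUnion, mem_filter, mem_univ, true_and]
    exact ⟨(a, b), hne, hab⟩
  have h1 := Finset.card_le_card hsub
  have h2 := Finset.card_biUnion_le (s := univ.filter fun pq : D × D => pq.1 ≠ pq.2)
    (t := fun pq => univ.filter fun h : D → V => h pq.1 = h pq.2)
  have h3 : ∑ pq ∈ univ.filter fun pq : D × D => pq.1 ≠ pq.2,
      (univ.filter fun h : D → V => h pq.1 = h pq.2).card ≤
      (Fintype.card D)^2 * Fintype.card V ^ (Fintype.card D - 1) := by
    calc ∑ pq ∈ univ.filter fun pq : D × D => pq.1 ≠ pq.2,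
        (univ.filter fun h : D → V => h pq.1 = h pq.2).card
        ≤ ∑ _pq ∈ univ.filter fun pq : D × D => pq.1 ≠ pq.2,
            Fintype.card V ^ (Fintype.card D - 1) := by
          apply Finset.sum_le_sum
          intro pq hpqm
          simp only [mem_filter, mem_univ, true_and] at hpqm
          exact hpq pq.1 pq.2 hpqm
      _ ≤ (Fintype.card D)^2 * Fintype.card V ^ (Fintype.card D - 1) := by
          rw [Finset.sum_const, smul_eq_mul]
          apply Nat.mul_le_mul_right
          calc (univ.filter fun pq : D × D => pq.1 ≠ pq.2).card
              ≤ (univ : Finset (D × D)).card := Finset.card_le_card (filter_subset _ _)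
            _ = (Fintype.card D)^2 := by
                rw [Finset.card_univ, Fintype.card_prod]; ring
  have := le_trans h1 (le_trans h2 h3)
  exact_mod_cast this

end Aux
lemma exists_box (r t : ℕ) (hr : 2 ≤ r) (ht : 1 ≤ t) (n : ℕ) (hn : (r*t)^4 + 1 ≤ n)
    (V : Type) [Fintype V] [DecidableEq V] (hcard : Fintype.card V = n)
    (E : Finset (Finset V)) (hEr : ∀ e ∈ E, e.card = r)
    (hE : (n : ℝ) ^ ((r : ℝ) - 1 / (2 * (t:ℝ)^r)) ≤ (E.card : ℝ)) :
    ∃ f : Fin r → Fin t → V, Function.Injective (fun p : Fin r × Fin t => f p.1 p.2) ∧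
      ∀ g : Fin r → Fin t, univ.image (fun i => f i (g i)) ∈ E := by
  classical
  have ht0 : (0:ℝ) < (t:ℝ) := by exact_mod_cast ht
  set c : ℝ := 1 / (2 * (t:ℝ)^r) with hcdef
  have hck : c * ((t:ℝ))^r = 1/2 := by
    rw [hcdef]
    have h0 : ((t:ℝ))^r ≠ 0 := by positivity
    field_simp
  clear_value c
  clear hcdef
  have hn1 : 1 ≤ n := le_trans (by omega) hn
  haveI hVne : Nonempty V := by
    rw [← Fintype.card_pos_iff, hcard]; omega
  have hN0 : (0:ℝ) < (n:ℝ) := by exact_mod_cast hn1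
  set A : (Fin r → V) → ℝ := fun x => if (univ.image x ∈ E) then (1:ℝ) else 0 with hAdef
  have hAnn : ∀ x, 0 ≤ A x := fun x => by
    simp only [hAdef]; split <;> norm_num
  have hA1 : ∀ x, A x ≤ 1 := fun x => by
    simp only [hAdef]; split <;> norm_num
  -- the array sum dominates the number of edges
  have hmsum : ∑ x : Fin r → V, A x
      = ((univ.filter fun x : Fin r → V => univ.image x ∈ E).card : ℝ) := by
    simp only [hAdef]
    rw [Finset.sum_boole]
  have hEle : E.card ≤ (univ.filter fun x : Fin r → V => univ.image x ∈ E).card := by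
    apply Finset.card_le_card_of_surjOn (fun x : Fin r → V => univ.image x)
    intro e he
    simp only [coe_filter, mem_univ, true_and, Set.mem_setOf_eq, mem_coe] at he ⊢
    have hce : Fintype.card ↥e = r := by rw [Fintype.card_coe]; exact hEr e he
    let eqv : ↥e ≃ Fin r := Fintype.equivFinOfCardEq hce
    have himg : univ.image (fun i => ((eqv.symm i : ↥e) : V)) = e := by
      ext v
      simp only [mem_image, mem_univ, true_and]
      constructor
      · rintro ⟨i, rfl⟩; exact (eqv.symm i).2
      · intro hv; exact ⟨eqv ⟨v, hv⟩, by simp⟩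
    exact ⟨fun i => (eqv.symm i : V),
      by simp only [Set.mem_setOf_eq]; rw [himg]; exact he, himg⟩
  have hmge : (E.card : ℝ) ≤ ∑ x : Fin r → V, A x := by
    rw [hmsum]; exact_mod_cast hEle
  -- apply the box-counting lemma
  have hbox := box_lb (V := V) t ht r A hAnn
  rw [hcard] at hbox
  -- lower bound the box sum
  have hm2 : (n:ℝ) ^ ((r:ℝ) - c) ≤ ∑ x : Fin r → V, A x := le_trans hE hmge
  have hmnn : (0:ℝ) ≤ ∑ x : Fin r → V, A x := Finset.sum_nonneg fun x _ => hAnn x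
  have hm3 : (n:ℝ) ^ (((r:ℝ) - c) * ((t^r : ℕ):ℝ)) ≤ (∑ x : Fin r → V, A x) ^ (t^r) := by
    rw [Real.rpow_mul hN0.le, Real.rpow_natCast]
    exact pow_le_pow_left₀ (Real.rpow_nonneg hN0.le _) hm2 _
  have h4 : (n:ℝ) ^ ((((r*t:ℕ)):ℝ) - 1/2 + ((r * t^r : ℕ):ℝ)) ≤
      boxSum t r A * (n:ℝ) ^ (((r * t^r : ℕ)):ℝ) := by
    have e5 : (((r*t:ℕ)):ℝ) - 1/2 + ((r * t^r : ℕ):ℝ)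
        = ((r:ℝ) - c) * ((t^r : ℕ):ℝ) + ((r*t:ℕ):ℝ) := by
      push_cast
      rw [sub_mul, hck]
      ring
    rw [e5, Real.rpow_add hN0, Real.rpow_natCast, Real.rpow_natCast]
    calc (n:ℝ) ^ (((r:ℝ) - c) * ((t^r : ℕ):ℝ)) * (n:ℝ) ^ (r*t)
        ≤ (∑ x : Fin r → V, A x) ^ (t^r) * (n:ℝ) ^ (r*t) :=
          mul_le_mul_of_nonneg_right hm3 (by positivity)
      _ ≤ boxSum t r A * (n:ℝ) ^ (r * t^r) := hbox
  have hboxlow : (n:ℝ) ^ ((((r*t:ℕ)):ℝ) - 1/2) ≤ boxSum t r A := by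
    rw [Real.rpow_add hN0] at h4
    exact le_of_mul_le_mul_right h4 (Real.rpow_pos_of_pos hN0 _)
  -- bad (non-injective) tuples
  set badP : (Fin r → Fin t → V) → Prop :=
    fun f => ¬ Function.Injective (fun p : Fin r × Fin t => f p.1 p.2) with hbadP
  have hbadcard : ((univ.filter badP).card : ℝ)
      ≤ (((r*t:ℕ)):ℝ)^2 * (n:ℝ) ^ ((r*t - 1 : ℕ)) := by
    have hcb : (univ.filter badP).card =
        (univ.filter fun h : (Fin r × Fin t) → V => ¬ Function.Injective h).card := by
      apply Finset.card_bij (fun f _ => fun p : Fin r × Fin t => f p.1 p.2)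
      · intro f hf
        simp only [hbadP, mem_filter, mem_univ, true_and] at hf ⊢
        exact hf
      · intro f₁ h₁ f₂ h₂ hf
        funext i j
        exact congrFun hf (i, j)
      · intro h hh
        simp only [mem_filter, mem_univ, true_and] at hh
        refine ⟨fun i j => h (i, j), ?_, ?_⟩
        · simp only [hbadP, mem_filter, mem_univ, true_and]
          convert hh using 2
        · funext p
          rfl
    rw [hcb]
    have h6 := noninj_card (V := V) (Fin r × Fin t)
    simp only [Fintype.card_prod, Fintype.card_fin, hcard] at h6
    exact_mod_cast h6
  have hbadsum : ∑ f ∈ univ.filter badP, (∏ g : Fin r → Fin t, A fun i => f i (g i))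
      ≤ ((univ.filter badP).card : ℝ) := by
    calc ∑ f ∈ univ.filter badP, (∏ g : Fin r → Fin t, A fun i => f i (g i))
        ≤ ∑ _f ∈ univ.filter badP, (1:ℝ) := by
          apply Finset.sum_le_sum
          intro f _
          exact Finset.prod_le_one (fun g _ => hAnn _) (fun g _ => hA1 _)
      _ = ((univ.filter badP).card : ℝ) := by rw [Finset.sum_const]; simp
  -- numeric comparison
  have hrt1 : 1 ≤ r * t := by
    have := Nat.mul_le_mul (show 1 ≤ r by omega) ht
    simpa using this
  have hsq : ((((r*t:ℕ)):ℝ))^2 < (n:ℝ) ^ ((1:ℝ)/2) := by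
    have hn4 : (((r*t:ℕ))^4 : ℝ) < (n:ℝ) := by
      have h7 : (r*t)^4 < n := by omega
      exact_mod_cast h7
    set a := (n:ℝ) ^ ((1:ℝ)/2) with hadef
    have ha0 : 0 ≤ a := Real.rpow_nonneg hN0.le _
    have ha2 : a^2 = (n:ℝ) := by
      rw [hadef, ← Real.rpow_natCast ((n:ℝ) ^ ((1:ℝ)/2)) 2, ← Real.rpow_mul hN0.le]
      norm_num
    have hc4 : (((r*t:ℕ))^4 : ℝ) = ((((r*t:ℕ)):ℝ)^2)^2 := by push_cast; ring
    nlinarith [sq_nonneg (a + (((r*t:ℕ)):ℝ)^2), sq_nonneg ((((r*t:ℕ)):ℝ))]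
  have hbadlt : ((univ.filter badP).card : ℝ) < boxSum t r A := by
    calc ((univ.filter badP).card : ℝ)
        ≤ (((r*t:ℕ)):ℝ)^2 * (n:ℝ) ^ ((r*t - 1 : ℕ)) := hbadcard
      _ < (n:ℝ) ^ ((1:ℝ)/2) * (n:ℝ) ^ ((r*t - 1 : ℕ)) := by
          apply mul_lt_mul_of_pos_right hsq
          positivity
      _ = (n:ℝ) ^ ((((r*t:ℕ)):ℝ) - 1/2) := by
          rw [← Real.rpow_natCast (n:ℝ) (r*t - 1), ← Real.rpow_add hN0]
          congr 1
          rw [Nat.cast_sub hrt1]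
          push_cast
          ring
      _ ≤ boxSum t r A := hboxlow
  -- extract a good tuple
  have hsplitsum : (∑ f ∈ univ.filter badP, ∏ g : Fin r → Fin t, A fun i => f i (g i)) +
      (∑ f ∈ univ.filter (fun f => ¬ badP f), ∏ g : Fin r → Fin t, A fun i => f i (g i))
      = boxSum t r A := by
    rw [boxSum]
    exact Finset.sum_filter_add_sum_filter_not univ badP _
  obtain ⟨f, hfmem, hfpos⟩ : ∃ f ∈ univ.filter (fun f => ¬ badP f),
      0 < ∏ g : Fin r → Fin t, A fun i => f i (g i) := by
    by_contra hcon
    push_neg at hcon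
    have hle : (∑ f ∈ univ.filter (fun f => ¬ badP f),
        ∏ g : Fin r → Fin t, A fun i => f i (g i)) ≤ 0 :=
      Finset.sum_nonpos hcon
    linarith
  have hfinj : Function.Injective (fun p : Fin r × Fin t => f p.1 p.2) := by
    simp only [hbadP, mem_filter, mem_univ, true_and, not_not] at hfmem
    exact hfmem
  refine ⟨f, hfinj, ?_⟩
  intro g
  by_contra hng
  have hz : A (fun i => f i (g i)) = 0 := by
    simp only [hAdef]
    exact if_neg hng
  have h8 := Finset.prod_eq_zero (f := fun g : Fin r → Fin t => A fun i => f i (g i))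
    (Finset.mem_univ g) hz
  linarith

/-- Erdős: for each `r ≥ 2` and each degenerate (`r`-partite) `r`-graph `𝒢`
(given by a finite vertex type `W` and edge set `F`, with an `r`-colouring in which every edge
has exactly one vertex of each colour), there are `c > 0` and `n₀` such that for all `n ≥ n₀`,
every `r`-graph `H` on `n` vertices with at least `n^(r-c)` edges contains a copy of `𝒢`. -/
theorem statement15 (r : ℕ) (hr : 2 ≤ r)
    (W : Type) [Fintype W] [DecidableEq W] (F : Finset (Finset W))
    (hFcard : ∀ e ∈ F, e.card = r)
    (hdeg : ∃ χ : W → Fin r, ∀ e ∈ F, ∀ i : Fin r, (e.filter fun w => χ w = i).card = 1) :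
    ∃ c : ℝ, 0 < c ∧ ∃ n₀ : ℕ, ∀ n : ℕ, n₀ ≤ n →
      ∀ (V : Type) [Fintype V] [DecidableEq V], Fintype.card V = n →
        ∀ E : Finset (Finset V), (∀ e ∈ E, e.card = r) →
          (n : ℝ) ^ ((r : ℝ) - c) ≤ (E.card : ℝ) →
          ∃ φ : W → V, Function.Injective φ ∧ ∀ e ∈ F, e.image φ ∈ E := by
  classical
  obtain ⟨χ, hχ⟩ := hdeg
  set t : ℕ := Fintype.card W + 1 with htdef
  have ht0 : (0:ℝ) < (t:ℝ) := by exact_mod_cast Nat.succ_pos _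
  refine ⟨1 / (2 * (t:ℝ)^r), by positivity, (r*t)^4 + 1, ?_⟩
  intro n hn V _ _ hcard E hEr hE
  obtain ⟨f, hfinj, hbox_edges⟩ := exists_box r t hr (by omega) n hn V hcard E hEr hE
  have hWt : Fintype.card W ≤ t := by omega
  set idx : W → Fin t := fun w => Fin.castLE hWt ((Fintype.equivFin W) w) with hidxdef
  have hidx : Function.Injective idx := fun a b h =>
    (Fintype.equivFin W).injective (Fin.castLE_injective hWt h)
  refine ⟨fun w => f (χ w) (idx w), ?_, ?_⟩
  · intro a b hab
    have h2 : ((χ a, idx a) : Fin r × Fin t) = (χ b, idx b) := hfinj hab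
    have h3 : idx a = idx b := congrArg Prod.snd h2
    exact hidx h3
  · intro e he
    have hw : ∀ i : Fin r, ∃ w, e.filter (fun w => χ w = i) = {w} :=
      fun i => Finset.card_eq_one.1 (hχ e he i)
    choose wv hwv using hw
    have hwmem : ∀ i, wv i ∈ e ∧ χ (wv i) = i := by
      intro i
      have : wv i ∈ e.filter (fun w => χ w = i) := by
        rw [hwv i]; exact mem_singleton_self _
      simpa using this
    have huniq : ∀ w ∈ e, w = wv (χ w) := by
      intro w hwe
      have h5 : w ∈ e.filter (fun w' => χ w' = χ w) := mem_filter.2 ⟨hwe, rfl⟩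
      rw [hwv (χ w)] at h5
      exact mem_singleton.1 h5
    have himg : e = univ.image wv := by
      ext w
      simp only [mem_image, mem_univ, true_and]
      constructor
      · intro hwe; exact ⟨χ w, (huniq w hwe).symm⟩
      · rintro ⟨i, rfl⟩; exact (hwmem i).1
    rw [himg, Finset.image_image]
    have hcomp : ((fun w => f (χ w) (idx w)) ∘ wv) = fun i => f i (idx (wv i)) := by
      funext i
      simp only [Function.comp_apply, (hwmem i).2]
    rw [hcomp]
    exact hbox_edges (fun i => idx (wv i))
end
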